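/- Characterization of the vanishing of X(s): in the ADRIS setting with unique invariant state ρ^inv_s of the irreducible CPTP map L(s), the following are equivalent: (1) X(s) := U(s)(ρ^inv_s⊗ξ_s)U(s)* − ρ^inv_s⊗ξ_s = 0; (2) there exists a self-adjoint operator K_S(s) on H_S such that [K_S(s)⊗Id + Id⊗h_E(s), U(s)] = 0. Moreover, if either condition holds, the detailed balance relation holds: for all ρ ∈ B(H_S), (ρ^inv_s)^{1/2} L(s)*((ρ^inv_s)^{−1/2} ρ (ρ^inv_s)^{−1/2}) (ρ^inv_s)^{1/2} = Tr_E(U(s)*(ρ⊗ξ_s)U(s)), where L(s)* is the adjoint of L(s) with respect to the trace duality. -/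

import Mathlib

open Matrix Finset Set
open scoped Kronecker ComplexOrder ENNReal

namespace RISPaper

variable {nS nE N : Type*}

/-- Partial trace over the second (environment) factor. -/
noncomputable def ptraceE [Fintype nE] (A : Matrix (nS × nE) (nS × nE) ℂ) :
    Matrix nS nS ℂ := Matrix.of fun i j => ∑ k : nE, A (i, k) (j, k)

/-- Partial trace over the first (system) factor. -/
noncomputable def ptraceS [Fintype nS] (A : Matrix (nS × nE) (nS × nE) ℂ) :
    Matrix nE nE ℂ := Matrix.of fun i j => ∑ k : nS, A (k, i) (k, j)

/-- Logarithm of a Hermitian matrix, via the spectral decomposition (junk value `0`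
on non-Hermitian matrices; eigenvalue `0` contributes `Real.log 0 = 0`). -/
noncomputable def hlog [Fintype N] [DecidableEq N] (A : Matrix N N ℂ) : Matrix N N ℂ :=
  if hA : A.IsHermitian then
    (hA.eigenvectorUnitary : Matrix N N ℂ) *
      Matrix.diagonal (fun i => (Real.log (hA.eigenvalues i) : ℂ)) *
      (star (hA.eigenvectorUnitary : Matrix N N ℂ))
  else 0

/-- von Neumann entropy `S(η) = -Tr (η log η)`. -/
noncomputable def vnEntropy [Fintype N] [DecidableEq N] (A : Matrix N N ℂ) : ℝ :=
  (-(A * hlog A).trace).re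

/-- Relative entropy `S(η|ν) = Tr (η (log η - log ν))`. -/
noncomputable def relEntropy [Fintype N] [DecidableEq N] (A B : Matrix N N ℂ) : ℝ :=
  ((A * (hlog A - hlog B)).trace).re

/-- Gibbs state `exp(-βh)/Tr(exp(-βh))`. -/
noncomputable def gibbs [Fintype N] [DecidableEq N] (β : ℝ) (h : Matrix N N ℂ) : Matrix N N ℂ :=
  (NormedSpace.exp ((-β : ℂ) • h)).trace⁻¹ • NormedSpace.exp ((-β : ℂ) • h)

/-- A state: positive semidefinite with unit trace. -/
def IsState [Fintype N] (ρ : Matrix N N ℂ) : Prop := ρ.PosSemidef ∧ ρ.trace = 1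

/-- A faithful state: positive definite with unit trace. -/
def IsFaithfulState [Fintype N] (ρ : Matrix N N ℂ) : Prop := ρ.PosDef ∧ ρ.trace = 1

/-- Square root of a positive semidefinite matrix (the Mathlib definition of Dec 2024,
since removed). -/
noncomputable def _root_.Matrix.PosSemidef.sqrt {n 𝕜 : Type*} [Fintype n] [DecidableEq n]
    [RCLike 𝕜] {A : Matrix n n 𝕜} (hA : A.PosSemidef) : Matrix n n 𝕜 :=
  hA.1.eigenvectorUnitary.1 * diagonal ((↑) ∘ (√·) ∘ hA.1.eigenvalues) *
    (star hA.1.eigenvectorUnitary : Matrix n n 𝕜)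

/-- Trace norm `‖A‖₁ = Tr √(AᴴA)`. -/
noncomputable def traceNorm [Fintype N] [DecidableEq N] (A : Matrix N N ℂ) : ℝ :=
  ((Matrix.posSemidef_conjTranspose_mul_self A).sqrt).trace.re

/-- Operator (ℓ²→ℓ²) norm of a matrix. -/
noncomputable def opNorm [Fintype N] [DecidableEq N] (A : Matrix N N ℂ) : ℝ :=
  ‖LinearMap.toContinuousLinearMap (Matrix.toEuclideanLin A)‖

/-- Operator norm of a map on matrices, with respect to the trace norm. -/
noncomputable def mapTNorm [Fintype N] [DecidableEq N]
    (f : Matrix N N ℂ → Matrix N N ℂ) : ℝ :=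
  sSup ((fun A => traceNorm (f A)) '' {A | traceNorm A ≤ 1})

/-- The smallest point of the spectrum of a Hermitian matrix (junk value `0` otherwise). -/
noncomputable def infSpec [Fintype N] [DecidableEq N] [Nonempty N] (A : Matrix N N ℂ) : ℝ :=
  if hA : A.IsHermitian then ⨅ i, hA.eigenvalues i else 0

/-- Amplification `Φ ⊗ id_k` of a map on matrices. -/
noncomputable def amp [Fintype N] (Φ : Matrix N N ℂ → Matrix N N ℂ) (k : ℕ)
    (M : Matrix (N × Fin k) (N × Fin k) ℂ) : Matrix (N × Fin k) (N × Fin k) ℂ :=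
  Matrix.of fun p q => Φ (Matrix.of fun i j => M (i, p.2) (j, q.2)) p.1 q.1

/-- Complete positivity. -/
def IsCompletelyPositive [Fintype N] (Φ : Matrix N N ℂ → Matrix N N ℂ) : Prop :=
  ∀ (k : ℕ) (M : Matrix (N × Fin k) (N × Fin k) ℂ), M.PosSemidef → (amp Φ k M).PosSemidef

/-- Trace preservation. -/
def IsTracePreserving [Fintype N] (Φ : Matrix N N ℂ → Matrix N N ℂ) : Prop :=
  ∀ A, (Φ A).trace = A.trace

/-- CPTP (quantum channel). -/
def IsCPTP [Fintype N] (Φ : Matrix N N ℂ → Matrix N N ℂ) : Prop :=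
  IsCompletelyPositive Φ ∧ IsTracePreserving Φ

/-- Irreducibility of a map on matrices: the only invariant hereditary subalgebras are
trivial. -/
def IsIrreducible [Fintype N] [DecidableEq N] (Φ : Matrix N N ℂ → Matrix N N ℂ) : Prop :=
  ∀ p : Matrix N N ℂ, p.IsHermitian → p * p = p →
    (∀ A, Φ (p * A * p) = p * Φ (p * A * p) * p) → p = 0 ∨ p = 1

/-- The divided-difference kernel entering the Hessian of relative entropy. -/
noncomputable def ddKernel (x y : ℝ) : ℝ :=
  if x = y then 1 / (2 * x) else (Real.log x - Real.log y) / (2 * (x - y))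

/-- The quadratic form `F_η(A,B)` of the paper (second-order expansion of relative entropy
around the faithful state `η`), written via the eigendecomposition of `η`. -/
noncomputable def Fq [Fintype N] [DecidableEq N] (η A B : Matrix N N ℂ) : ℝ :=
  if hη : η.IsHermitian then
    (∑ a : N, ∑ b : N,
      (ddKernel (hη.eigenvalues a) (hη.eigenvalues b) : ℂ) *
        ((star (hη.eigenvectorUnitary : Matrix N N ℂ) * A *
            (hη.eigenvectorUnitary : Matrix N N ℂ)) b a *
         (star (hη.eigenvectorUnitary : Matrix N N ℂ) * B *
            (hη.eigenvectorUnitary : Matrix N N ℂ)) a b)).re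
  else 0

/-- `(1 - D)^{-1/2}` defined by the binomial series `Σ (centralBinom n / 4^n) Dⁿ`
(converging for `‖D‖ < 1`). -/
noncomputable def invSqrtOneSub {X : Type*} [NormedAddCommGroup X] [NormedSpace ℂ X]
    (D : X →L[ℂ] X) : X →L[ℂ] X :=
  ∑' n : ℕ, ((Nat.centralBinom n : ℂ) / 4 ^ n) • D ^ n

/-- Ordered product `f k * f (k-1) * ⋯ * f 1` (equal to `1` for `k = 0`). -/
noncomputable def opProd {α : Type*} [Monoid α] (f : ℕ → α) : ℕ → α
  | 0 => 1
  | k + 1 => f (k + 1) * opProd f k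

/-- `P` is the spectral projection of `L` associated with the peripheral part of the
spectrum (eigenvalues of modulus one). -/
def IsPeripheralProj {X : Type*} [NormedAddCommGroup X] [NormedSpace ℂ X]
    (L P : X →L[ℂ] X) : Prop :=
  P * P = P ∧ L * P = P * L ∧
    (LinearMap.range (P : X →ₗ[ℂ] X) =
      ⨆ z ∈ {z : ℂ | ‖z‖ = 1}, Module.End.maxGenEigenspace (L : X →ₗ[ℂ] X) z) ∧
    (LinearMap.ker (P : X →ₗ[ℂ] X) =
      ⨆ z ∈ {z : ℂ | ‖z‖ ≠ 1}, Module.End.maxGenEigenspace (L : X →ₗ[ℂ] X) z)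

/-- `P` is the spectral projection of `L` associated with the eigenvalue `z`. -/
def IsSpectralProjAt {X : Type*} [NormedAddCommGroup X] [NormedSpace ℂ X]
    (L P : X →L[ℂ] X) (z : ℂ) : Prop :=
  P * P = P ∧ L * P = P * L ∧
    (LinearMap.range (P : X →ₗ[ℂ] X) =
      Module.End.maxGenEigenspace (L : X →ₗ[ℂ] X) z) ∧
    (LinearMap.ker (P : X →ₗ[ℂ] X) =
      ⨆ w ∈ {w : ℂ | w ≠ z}, Module.End.maxGenEigenspace (L : X →ₗ[ℂ] X) w)

attribute [local instance] Matrix.linftyOpNormedAddCommGroup Matrix.linftyOpNormedSpace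
attribute [local instance] Matrix.linftyOpNormedRing Matrix.linftyOpNormedAlgebra

end RISPaper

/-!
Since `U` is unitary, `X = 0` says exactly that `U` commutes with `ρ ⊗ ξ`, and everything then
rests on the fact that a matrix commuting with a Hermitian (or positive) matrix commutes with
every function of it. As `ρ ⊗ ξ` is a multiple of `exp (log ρ ⊗ 1 - β (1 ⊗ h_E))`, taking
logarithms shows that `U` commutes with `K ⊗ 1 + 1 ⊗ h_E` for `K = -β⁻¹ log ρ`. Conversely, if
`U` commutes with `K ⊗ 1 + 1 ⊗ h_E`, it commutes with its exponential, a multiple of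
`gibbs β K ⊗ ξ`; this state is then fixed by conjugation with `U`, so `gibbs β K` is invariant
under `L` and equals `ρ` by uniqueness. Finally `U` commutes with
`(ρ ⊗ ξ)^{1/2} = ρ^{1/2} ⊗ ξ^{1/2}`, which lets these square roots pass through `U` in the trace
duality defining `L*`.
-/

namespace Matrix

theorem IsHermitian.kronecker {m n : Type*} {A : Matrix m m ℂ} {B : Matrix n n ℂ}
    (hA : A.IsHermitian) (hB : B.IsHermitian) : (A ⊗ₖ B).IsHermitian := by
  rw [IsHermitian, conjTranspose_kronecker, hA.eq, hB.eq]

theorem mul_mul_conjTranspose_eq_iff_commute {m : Type*} [Fintype m] [DecidableEq m]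
    {U M : Matrix m m ℂ} (hU : U ∈ unitaryGroup m ℂ) : U * M * Uᴴ = M ↔ Commute U M := by
  have hUU : Uᴴ * U = 1 := mem_unitaryGroup_iff'.mp hU
  have hUU' : U * Uᴴ = 1 := mem_unitaryGroup_iff.mp hU
  refine ⟨fun hM => ?_, fun hM => ?_⟩
  · calc U * M = U * M * Uᴴ * U := by rw [mul_assoc (U * M), hUU, mul_one]
      _ = M * U := by rw [hM]
  · rw [hM.eq, mul_assoc, hUU', mul_one]

section Exponential

-- `NormedSpace.exp` depends only on the topology, so which matrix norm is chosen is immaterial.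
attribute [local instance] Matrix.linftyOpNormedAddCommGroup Matrix.linftyOpNormedSpace
  Matrix.linftyOpNormedRing Matrix.linftyOpNormedAlgebra

variable {m n : Type*} [Fintype m] [DecidableEq m] [Fintype n] [DecidableEq n]

theorem exp_kronecker_one (A : Matrix m m ℂ) :
    NormedSpace.exp (A ⊗ₖ (1 : Matrix n n ℂ)) = NormedSpace.exp A ⊗ₖ 1 := by
  let f : Matrix m m ℂ →ₐ[ℂ] Matrix (m × n) (m × n) ℂ :=
    (kroneckerAlgEquiv m n ℂ).toAlgHom.comp Algebra.TensorProduct.includeLeft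
  exact (NormedSpace.map_exp f f.toLinearMap.continuous_of_finiteDimensional A).symm

theorem exp_one_kronecker (B : Matrix n n ℂ) :
    NormedSpace.exp ((1 : Matrix m m ℂ) ⊗ₖ B) = 1 ⊗ₖ NormedSpace.exp B := by
  let f : Matrix n n ℂ →ₐ[ℂ] Matrix (m × n) (m × n) ℂ :=
    (kroneckerAlgEquiv m n ℂ).toAlgHom.comp Algebra.TensorProduct.includeRight
  exact (NormedSpace.map_exp f f.toLinearMap.continuous_of_finiteDimensional B).symm

theorem exp_kronecker_one_add_one_kronecker (A : Matrix m m ℂ) (B : Matrix n n ℂ) :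
    NormedSpace.exp (A ⊗ₖ (1 : Matrix n n ℂ) + (1 : Matrix m m ℂ) ⊗ₖ B) =
      NormedSpace.exp A ⊗ₖ NormedSpace.exp B := by
  have hAB : Commute (A ⊗ₖ (1 : Matrix n n ℂ)) ((1 : Matrix m m ℂ) ⊗ₖ B) := by
    simp [Commute, SemiconjBy, ← mul_kronecker_mul]
  rw [exp_add_of_commute _ _ hAB, exp_kronecker_one, exp_one_kronecker,
    ← mul_kronecker_mul, mul_one, one_mul]

theorem IsHermitian.exp_neg_I_mul_smul_mem_unitaryGroup {H : Matrix n n ℂ}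
    (hH : H.IsHermitian) (t : ℝ) :
    NormedSpace.exp ((-(Complex.I) * (t : ℂ)) • H) ∈ unitaryGroup n ℂ := by
  have hskew : ((-(Complex.I) * (t : ℂ)) • H)ᴴ = -((-(Complex.I) * (t : ℂ)) • H) := by
    rw [conjTranspose_smul, hH.eq, ← neg_smul]
    simp [Complex.conj_ofReal]
  rw [mem_unitaryGroup_iff, star_eq_conjTranspose, ← exp_conjTranspose, hskew, exp_neg]
  exact mul_nonsing_inv _ ((isUnit_iff_isUnit_det _).mp (isUnit_exp _))

end Exponential

section FunctionalCalculus

variable {n : Type*} [Fintype n] [DecidableEq n]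

open scoped MatrixOrder

theorem IsHermitian.commute_of_commute_exp {A B : Matrix n n ℂ} (hA : A.IsHermitian)
    (h : Commute B (NormedSpace.exp A)) : Commute B A := by
  open scoped Matrix.Norms.L2Operator in
  rw [← CFC.log_exp A hA.isSelfAdjoint]
  exact (h.symm.cfc_real _).symm

theorem IsHermitian.posDef_exp {A : Matrix n n ℂ} (hA : A.IsHermitian) :
    (NormedSpace.exp A).PosDef := by
  open scoped Matrix.Norms.L2Operator in
  rw [← isStrictlyPositive_iff_posDef, ← CFC.real_exp_eq_normedSpace_exp hA.isSelfAdjoint,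
    cfc_isStrictlyPositive_iff Real.exp A]
  exact fun x _ => Real.exp_pos x

theorem PosSemidef.sqrt_eq_cfcSqrt {A : Matrix n n ℂ} (hA : A.PosSemidef) :
    hA.sqrt = CFC.sqrt A := by
  rw [CFC.sqrt_eq_cfc, cfc_nnreal_eq_real _ A, hA.1.cfc_eq, IsHermitian.cfc,
    Unitary.conjStarAlgAut_apply, PosSemidef.sqrt]
  congr 3
  funext i
  simp [hA.eigenvalues_nonneg i]

theorem PosSemidef.sqrt_mul_self {A : Matrix n n ℂ} (hA : A.PosSemidef) :
    hA.sqrt * hA.sqrt = A := by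
  rw [hA.sqrt_eq_cfcSqrt]
  exact CFC.sqrt_mul_sqrt_self A hA.nonneg

theorem PosSemidef.posSemidef_sqrt {A : Matrix n n ℂ} (hA : A.PosSemidef) :
    hA.sqrt.PosSemidef := by
  rw [hA.sqrt_eq_cfcSqrt]
  exact (CFC.sqrt_nonneg A).posSemidef

theorem PosSemidef.sqrt_eq_of_mul_self {A B : Matrix n n ℂ} (hA : A.PosSemidef)
    (hB : B.PosSemidef) (h : B * B = A) : hA.sqrt = B := by
  rw [hA.sqrt_eq_cfcSqrt]
  exact CFC.sqrt_unique h hB.nonneg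

theorem PosSemidef.commute_sqrt {A B : Matrix n n ℂ} (hA : A.PosSemidef) (h : Commute B A) :
    Commute B hA.sqrt := by
  rw [hA.sqrt_eq_cfcSqrt, CFC.sqrt_eq_cfc]
  exact (h.symm.cfc_nnreal _).symm

theorem PosDef.isUnit_sqrt {A : Matrix n n ℂ} (hA : A.PosDef) : IsUnit hA.posSemidef.sqrt := by
  rw [isUnit_iff_isUnit_det]
  refine isUnit_of_mul_isUnit_left (y := hA.posSemidef.sqrt.det) ?_
  rw [← det_mul, hA.posSemidef.sqrt_mul_self]
  exact (isUnit_iff_isUnit_det _).mp hA.isUnit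

theorem PosSemidef.sqrt_kronecker {m : Type*} [Fintype m] [DecidableEq m] {A : Matrix n n ℂ}
    {B : Matrix m m ℂ} (hA : A.PosSemidef) (hB : B.PosSemidef) :
    (hA.kronecker hB).sqrt = hA.sqrt ⊗ₖ hB.sqrt :=
  (hA.kronecker hB).sqrt_eq_of_mul_self (hA.posSemidef_sqrt.kronecker hB.posSemidef_sqrt)
    (by rw [← mul_kronecker_mul, hA.sqrt_mul_self, hB.sqrt_mul_self])

end FunctionalCalculus
end Matrix

namespace RISPaper

variable {nS nE N : Type*}

section Logarithm

variable [Fintype N] [DecidableEq N]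

open scoped MatrixOrder

theorem hlog_eq_cfc {A : Matrix N N ℂ} (hA : A.IsHermitian) : hlog A = cfc Real.log A := by
  rw [hlog, dif_pos hA, hA.cfc_eq, IsHermitian.cfc, Unitary.conjStarAlgAut_apply]
  rfl

theorem exp_hlog {A : Matrix N N ℂ} (hA : A.PosDef) : NormedSpace.exp (hlog A) = A := by
  open scoped Matrix.Norms.L2Operator in
  rw [hlog_eq_cfc hA.1]
  exact CFC.exp_log A hA.isStrictlyPositive

theorem isHermitian_hlog (A : Matrix N N ℂ) : (hlog A).IsHermitian := by
  by_cases hA : A.IsHermitian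
  · rw [hlog_eq_cfc hA]; exact cfc_predicate _ _
  · rw [hlog, dif_neg hA]; exact isHermitian_zero

end Logarithm

section PartialTrace

variable [Fintype nE]

theorem ptraceE_kronecker (A : Matrix nS nS ℂ) (B : Matrix nE nE ℂ) :
    ptraceE (A ⊗ₖ B) = B.trace • A := by
  ext i j
  simp [ptraceE, Matrix.trace, Finset.mul_sum, mul_comm]

theorem trace_ptraceE_mul [Fintype nS] [DecidableEq nE] (B : Matrix (nS × nE) (nS × nE) ℂ)
    (C : Matrix nS nS ℂ) : (ptraceE B * C).trace = (B * (C ⊗ₖ (1 : Matrix nE nE ℂ))).trace := by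
  simp only [ptraceE, Matrix.trace, Matrix.diag, Matrix.mul_apply, Matrix.of_apply,
    Matrix.kroneckerMap_apply, Matrix.one_apply, Fintype.sum_prod_type, mul_ite, mul_one,
    mul_zero, Finset.sum_ite_eq', Finset.mem_univ, if_true, Finset.sum_mul]
  exact Finset.sum_congr rfl fun _ _ => Finset.sum_comm

end PartialTrace

theorem detailed_balance_of_commute [Fintype nS] [DecidableEq nS] [Fintype nE]
    [DecidableEq nE] {U : Matrix (nS × nE) (nS × nE) ℂ} {ξ : Matrix nE nE ℂ} {r : Matrix nS nS ℂ}
    {s : Matrix nE nE ℂ} (hr : IsUnit r) (hrs : (r ⊗ₖ s).IsHermitian) (hs : s * s = ξ)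
    (hU : Commute U (r ⊗ₖ s)) (Ladj : Matrix nS nS ℂ → Matrix nS nS ℂ)
    (hLadj : ∀ ρ A, (ptraceE (U * (ρ ⊗ₖ ξ) * Uᴴ) * A).trace = (ρ * Ladj A).trace)
    (ρ : Matrix nS nS ℂ) :
    r * Ladj (r⁻¹ * ρ * r⁻¹) * r = ptraceE (Uᴴ * (ρ ⊗ₖ ξ) * U) := by
  set R := r ⊗ₖ s
  have hUR : Commute Uᴴ R := by simpa [star_eq_conjTranspose, hrs.eq] using hU.star_star
  have hkron (σ : Matrix nS nS ℂ) : (r * σ * r) ⊗ₖ ξ = R * (σ ⊗ₖ 1) * R := by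
    rw [← mul_kronecker_mul, ← mul_kronecker_mul, mul_one, hs]
  have hρ : ρ ⊗ₖ ξ = R * ((r⁻¹ * ρ * r⁻¹) ⊗ₖ 1) * R := by
    have hdet := (isUnit_iff_isUnit_det r).mp hr
    rw [← hkron, ← mul_assoc, nonsing_inv_mul_cancel_right r _ hdet,
      mul_nonsing_inv_cancel_left r _ hdet]
  have hconj (σ : Matrix nS nS ℂ) :
      U * ((r * σ * r) ⊗ₖ ξ) * Uᴴ = R * (U * (σ ⊗ₖ 1) * Uᴴ) * R :=
    calc U * ((r * σ * r) ⊗ₖ ξ) * Uᴴ = U * R * (σ ⊗ₖ 1) * (R * Uᴴ) := by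
          rw [hkron]; simp only [mul_assoc]
      _ = R * (U * (σ ⊗ₖ 1) * Uᴴ) * R := by
          rw [hU.eq, ← hUR.eq]; simp only [mul_assoc]
  rw [ext_iff_trace_mul_left]
  intro σ
  set S : Matrix (nS × nE) (nS × nE) ℂ := σ ⊗ₖ 1
  calc (σ * (r * Ladj (r⁻¹ * ρ * r⁻¹) * r)).trace
      = (r * σ * r * Ladj (r⁻¹ * ρ * r⁻¹)).trace := by
        rw [← mul_assoc, ← mul_assoc, trace_mul_cycle, ← mul_assoc]
    _ = (R * (U * S * Uᴴ) * R * ((r⁻¹ * ρ * r⁻¹) ⊗ₖ 1)).trace := by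
        rw [← hLadj, trace_ptraceE_mul, hconj]
    _ = (U * S * Uᴴ * (ρ ⊗ₖ ξ)).trace := by
        rw [hρ, mul_assoc (R * _), trace_mul_cycle, trace_mul_comm]
    _ = (σ * ptraceE (Uᴴ * (ρ ⊗ₖ ξ) * U)).trace := by
        rw [trace_mul_comm σ, trace_ptraceE_mul, mul_assoc (U * S), trace_mul_comm, ← mul_assoc]

attribute [local instance] Matrix.linftyOpNormedAddCommGroup Matrix.linftyOpNormedSpace
attribute [local instance] Matrix.linftyOpNormedRing Matrix.linftyOpNormedAlgebra

section Gibbs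

variable [Fintype N] [DecidableEq N] {h : Matrix N N ℂ}

theorem posDef_exp_neg_smul (hh : h.IsHermitian) (β : ℝ) :
    (NormedSpace.exp ((-β : ℂ) • h)).PosDef :=
  (hh.smul (IsSelfAdjoint.neg (Complex.conj_ofReal β))).posDef_exp

theorem trace_exp_neg_smul_ne_zero [Nonempty N] (hh : h.IsHermitian) (β : ℝ) :
    (NormedSpace.exp ((-β : ℂ) • h)).trace ≠ 0 :=
  (posDef_exp_neg_smul hh β).trace_pos.ne'

theorem isState_gibbs [Nonempty N] (hh : h.IsHermitian) (β : ℝ) : IsState (gibbs β h) := by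
  have hpos := posDef_exp_neg_smul hh β
  refine ⟨(hpos.smul (inv_pos.2 hpos.trace_pos)).posSemidef, ?_⟩
  rw [gibbs, trace_smul, smul_eq_mul, inv_mul_cancel₀ hpos.trace_pos.ne']

end Gibbs

section Commutation

variable [Fintype nS] [DecidableEq nS] [Fintype nE] [DecidableEq nE]
  {U : Matrix (nS × nE) (nS × nE) ℂ} {h : Matrix nE nE ℂ}

theorem commute_hamiltonian_of_commute_kronecker_gibbs [Nonempty nE] {ρ : Matrix nS nS ℂ}
    (hρ : ρ.PosDef) (hh : h.IsHermitian) {β : ℝ} (hβ : β ≠ 0)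
    (hU : Commute U (ρ ⊗ₖ gibbs β h)) :
    Commute U ((((-β⁻¹ : ℝ) : ℂ) • hlog ρ) ⊗ₖ 1 + 1 ⊗ₖ h) := by
  set G : Matrix (nS × nE) (nS × nE) ℂ := hlog ρ ⊗ₖ 1 + 1 ⊗ₖ ((-β : ℂ) • h)
  have hG : G.IsHermitian := ((isHermitian_hlog ρ).kronecker isHermitian_one).add
    (isHermitian_one.kronecker (hh.smul (IsSelfAdjoint.neg (Complex.conj_ofReal β))))
  have hexpG : NormedSpace.exp G =
      (NormedSpace.exp ((-β : ℂ) • h)).trace • (ρ ⊗ₖ gibbs β h) := by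
    rw [exp_kronecker_one_add_one_kronecker, exp_hlog hρ, gibbs, kronecker_smul, smul_smul,
      mul_inv_cancel₀ (trace_exp_neg_smul_ne_zero hh β), one_smul]
  have hUG : Commute U G := hG.commute_of_commute_exp (hexpG ▸ hU.smul_right _)
  have hc : ((-β⁻¹ : ℝ) : ℂ) * (-β : ℂ) = 1 := by
    push_cast
    field_simp
  have hK : (((-β⁻¹ : ℝ) : ℂ) • hlog ρ) ⊗ₖ 1 + 1 ⊗ₖ h = ((-β⁻¹ : ℝ) : ℂ) • G := by
    simp only [G, smul_add, smul_kronecker, kronecker_smul, smul_smul, hc, one_smul]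
  exact hK ▸ hUG.smul_right _

theorem commute_kronecker_gibbs_of_commute_hamiltonian {K : Matrix nS nS ℂ} (β : ℝ)
    (hU : Commute U (K ⊗ₖ 1 + 1 ⊗ₖ h)) : Commute U (gibbs β K ⊗ₖ gibbs β h) := by
  have hexp : gibbs β K ⊗ₖ gibbs β h =
      ((NormedSpace.exp ((-β : ℂ) • K)).trace⁻¹ * (NormedSpace.exp ((-β : ℂ) • h)).trace⁻¹) •
        NormedSpace.exp ((-β : ℂ) • (K ⊗ₖ 1 + 1 ⊗ₖ h)) := by
    rw [smul_add, ← smul_kronecker, ← kronecker_smul, exp_kronecker_one_add_one_kronecker, gibbs,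
      gibbs, smul_kronecker, kronecker_smul, smul_smul, mul_comm]
  rw [hexp]
  exact (hU.smul_right _).exp_right.smul_right _

end Commutation

theorem vanishing_X_detailed_balance_general
    {nS nE : Type*} [Fintype nS] [DecidableEq nS] [Nonempty nS]
    [Fintype nE] [DecidableEq nE] [Nonempty nE]
    (hS : Matrix nS nS ℂ) (hhS : hS.IsHermitian)
    (hE : Matrix nE nE ℂ) (hhE : hE.IsHermitian)
    (β : ℝ) (hβ : 0 < β)
    (v : Matrix (nS × nE) (nS × nE) ℂ) (hv : v.IsHermitian)
    (τ lam : ℝ)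
    (ξ : Matrix nE nE ℂ) (hξ : ξ = gibbs β hE)
    (U : Matrix (nS × nE) (nS × nE) ℂ)
    (hU : U = NormedSpace.exp ((-(Complex.I) * (τ : ℂ)) •
      (hS ⊗ₖ (1 : Matrix nE nE ℂ) + (1 : Matrix nS nS ℂ) ⊗ₖ hE + (lam : ℂ) • v)))
    (L : Matrix nS nS ℂ →L[ℂ] Matrix nS nS ℂ)
    (hL : ∀ ρ, L ρ = ptraceE (U * (ρ ⊗ₖ ξ) * Uᴴ))
    (ρinv : Matrix nS nS ℂ) (hρinv_faith : IsFaithfulState ρinv)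
    (hρinv_uniq : ∀ ρ, IsState ρ → L ρ = ρ → ρ = ρinv)
    -- the adjoint of `L` with respect to the trace duality
    (Ladj : Matrix nS nS ℂ →L[ℂ] Matrix nS nS ℂ)
    (hLadj : ∀ ρ A, ((L ρ) * A).trace = (ρ * (Ladj A)).trace) :
    (U * (ρinv ⊗ₖ ξ) * Uᴴ - ρinv ⊗ₖ ξ = 0 ↔
      ∃ K : Matrix nS nS ℂ, K.IsHermitian ∧
        (K ⊗ₖ (1 : Matrix nE nE ℂ) + (1 : Matrix nS nS ℂ) ⊗ₖ hE) * U =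
          U * (K ⊗ₖ (1 : Matrix nE nE ℂ) + (1 : Matrix nS nS ℂ) ⊗ₖ hE)) ∧
    (U * (ρinv ⊗ₖ ξ) * Uᴴ - ρinv ⊗ₖ ξ = 0 →
      ∀ ρ : Matrix nS nS ℂ,
        (hρinv_faith.1.posSemidef.sqrt) *
            Ladj ((hρinv_faith.1.posSemidef.sqrt)⁻¹ * ρ *
              (hρinv_faith.1.posSemidef.sqrt)⁻¹) *
            (hρinv_faith.1.posSemidef.sqrt) =
          ptraceE (Uᴴ * (ρ ⊗ₖ ξ) * U)) := by
  have hUu : U ∈ unitaryGroup (nS × nE) ℂ := by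
    rw [hU]
    exact (((hhS.kronecker isHermitian_one).add (isHermitian_one.kronecker hhE)).add
      (hv.smul (Complex.conj_ofReal lam))).exp_neg_I_mul_smul_mem_unitaryGroup τ
  have hξ_state : IsState ξ := hξ ▸ isState_gibbs hhE β
  have hX : U * (ρinv ⊗ₖ ξ) * Uᴴ - ρinv ⊗ₖ ξ = 0 ↔ Commute U (ρinv ⊗ₖ ξ) := by
    rw [sub_eq_zero, mul_mul_conjTranspose_eq_iff_commute hUu]
  refine ⟨⟨fun hX0 => ?_, fun ⟨K, hK, hKU⟩ => ?_⟩, fun hX0 ρ => ?_⟩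
  · exact ⟨_, (isHermitian_hlog ρinv).smul (Complex.conj_ofReal (-β⁻¹)),
      (commute_hamiltonian_of_commute_kronecker_gibbs hρinv_faith.1 hhE hβ.ne'
        (hξ ▸ hX.1 hX0)).symm.eq⟩
  · have hfix : Commute U (gibbs β K ⊗ₖ ξ) :=
      hξ ▸ commute_kronecker_gibbs_of_commute_hamiltonian β (Commute.symm hKU)
    have hLfix : L (gibbs β K) = gibbs β K := by
      rw [hL, (mul_mul_conjTranspose_eq_iff_commute hUu).2 hfix, ptraceE_kronecker,
        hξ_state.2, one_smul]
    rw [hX, ← hρinv_uniq _ (isState_gibbs hK β) hLfix]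
    exact hfix
  · have hρ := hρinv_faith.1
    have hξ_psd := hξ_state.1
    refine detailed_balance_of_commute hρ.isUnit_sqrt
      (hρ.posSemidef.posSemidef_sqrt.kronecker hξ_psd.posSemidef_sqrt).1
      hξ_psd.sqrt_mul_self ?_ Ladj (fun σ A => by rw [← hL, hLadj]) ρ
    rw [← hρ.posSemidef.sqrt_kronecker hξ_psd]
    exact (hρ.posSemidef.kronecker hξ_psd).commute_sqrt (hX.1 hX0)

/-- **Characterization of the vanishing of `X(s)`** (Lemma 5.5): at a fixed value of `s`,
for the ADRIS data with irreducible reduced dynamics `L` and (faithful) invariant state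
`ρ^inv`, one has `X = U(ρ^inv ⊗ ξ)U* - ρ^inv ⊗ ξ = 0` if and only if there is a
self-adjoint `K_S` on `H_S` with `[K_S ⊗ Id + Id ⊗ h_E, U] = 0`; moreover in that case
the detailed balance relation
`(ρ^inv)^{1/2} L*((ρ^inv)^{-1/2} ρ (ρ^inv)^{-1/2}) (ρ^inv)^{1/2} = Tr_E(U*(ρ ⊗ ξ)U)`
holds for every `ρ`. -/
theorem vanishing_X_detailed_balance
    {nS nE : Type*} [Fintype nS] [DecidableEq nS] [Nonempty nS]
    [Fintype nE] [DecidableEq nE] [Nonempty nE]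
    (hS : Matrix nS nS ℂ) (hhS : hS.IsHermitian)
    (hE : Matrix nE nE ℂ) (hhE : hE.IsHermitian)
    (β : ℝ) (hβ : 0 < β)
    (v : Matrix (nS × nE) (nS × nE) ℂ) (hv : v.IsHermitian)
    (τ lam : ℝ) (hτ : 0 < τ)
    (ξ : Matrix nE nE ℂ) (hξ : ξ = gibbs β hE)
    (U : Matrix (nS × nE) (nS × nE) ℂ)
    (hU : U = NormedSpace.exp ((-(Complex.I) * (τ : ℂ)) •
      (hS ⊗ₖ (1 : Matrix nE nE ℂ) + (1 : Matrix nS nS ℂ) ⊗ₖ hE + (lam : ℂ) • v)))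
    (L : Matrix nS nS ℂ →L[ℂ] Matrix nS nS ℂ)
    (hL : ∀ ρ, L ρ = ptraceE (U * (ρ ⊗ₖ ξ) * Uᴴ))
    (hirr : IsIrreducible (fun ρ => L ρ))
    (ρinv : Matrix nS nS ℂ) (hρinv_faith : IsFaithfulState ρinv)
    (hρinv_inv : L ρinv = ρinv)
    (hρinv_uniq : ∀ ρ, IsState ρ → L ρ = ρ → ρ = ρinv)
    -- the adjoint of `L` with respect to the trace duality
    (Ladj : Matrix nS nS ℂ →L[ℂ] Matrix nS nS ℂ)
    (hLadj : ∀ ρ A, ((L ρ) * A).trace = (ρ * (Ladj A)).trace) :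
    (U * (ρinv ⊗ₖ ξ) * Uᴴ - ρinv ⊗ₖ ξ = 0 ↔
      ∃ K : Matrix nS nS ℂ, K.IsHermitian ∧
        (K ⊗ₖ (1 : Matrix nE nE ℂ) + (1 : Matrix nS nS ℂ) ⊗ₖ hE) * U =
          U * (K ⊗ₖ (1 : Matrix nE nE ℂ) + (1 : Matrix nS nS ℂ) ⊗ₖ hE)) ∧
    (U * (ρinv ⊗ₖ ξ) * Uᴴ - ρinv ⊗ₖ ξ = 0 →
      ∀ ρ : Matrix nS nS ℂ,
        (hρinv_faith.1.posSemidef.sqrt) *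
            Ladj ((hρinv_faith.1.posSemidef.sqrt)⁻¹ * ρ *
              (hρinv_faith.1.posSemidef.sqrt)⁻¹) *
            (hρinv_faith.1.posSemidef.sqrt) =
          ptraceE (Uᴴ * (ρ ⊗ₖ ξ) * U)) :=
  vanishing_X_detailed_balance_general hS hhS hE hhE β hβ v hv τ lam ξ hξ U hU L hL ρinv hρinv_faith
    hρinv_uniq Ladj hLadj

end RISPaper
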